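/- If S : Γ | α holds, then Γ ⇒ α is immediately derivable from S; moreover if every sequent in S is intuitionistically derivable and every sequent Γ ⇒ γ (γ ∈ Γ) is intuitionistically derivable, then Γ ⇒ α is intuitionistically derivable. -/
import Mathlib


/-- Propositional formulas over `⊥, ∨, ∧, ⊃` with variables. -/
inductive Fml : Type
  | var : ℕ → Fml
  | bot : Fml
  | and : Fml → Fml → Fml
  | or : Fml → Fml → Fml
  | imp : Fml → Fml → Fml
  deriving DecidableEq

abbrev Cedent := Finset Fml
abbrev Sequent := Cedent × Fml

/-- Natural deduction derivations for intuitionistic propositional logic (NJp),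
with sequents `Γ ⇒ α`, axioms `α, Γ ⇒ α` and `⊥, Γ ⇒ p` for atoms `p`. -/
inductive NJ : Cedent → Fml → Type
  | ax {Γ α} : α ∈ Γ → NJ Γ α
  | botE {Γ p} : Fml.bot ∈ Γ → NJ Γ (Fml.var p)
  | andI {Γ α β} : NJ Γ α → NJ Γ β → NJ Γ (Fml.and α β)
  | andE₀ {Γ α β} : NJ Γ (Fml.and α β) → NJ Γ α
  | andE₁ {Γ α β} : NJ Γ (Fml.and α β) → NJ Γ β
  | orI₀ {Γ α β} : NJ Γ α → NJ Γ (Fml.or α β)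
  | orI₁ {Γ α β} : NJ Γ β → NJ Γ (Fml.or α β)
  | orE {Γ α β γ} : NJ Γ (Fml.or α β) → NJ (insert α Γ) γ → NJ (insert β Γ) γ → NJ Γ γ
  | impI {Γ α β} : NJ (insert α Γ) β → NJ Γ (Fml.imp α β)
  | impE {Γ α β} : NJ Γ (Fml.imp α β) → NJ Γ α → NJ Γ β

/-- Intuitionistic derivability of a sequent. -/
def Derivable (Γ : Cedent) (α : Fml) : Prop := Nonempty (NJ Γ α)

/-- Harrop formulas: no strictly positive occurrence of `∨`. -/
def Harrop : Fml → Prop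
  | .var _ => True
  | .bot => True
  | .and α β => Harrop α ∧ Harrop β
  | .or _ _ => False
  | .imp _ β => Harrop β

/-- A Harrop cedent: all of its formulas are Harrop. -/
def HarropCed (Γ : Cedent) : Prop := ∀ γ ∈ Γ, Harrop γ

/-- Sequents immediately derivable (by cuts only) from a set of sequents `S`. -/
inductive ID (S : Set Sequent) : Sequent → Prop
  | mem {s} : s ∈ S → ID S s
  | cut {Γ Δ : Cedent} {α β : Fml} :
      ID S (Γ, β) → ID S (insert β Δ, α) → ID S (Γ ∪ Δ, α)

/-- The feasible variant of Aczel's slash: `Slash S Γ α` means `Γ ⇒ α` is immediately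
derivable from `S` and the inductive slash conditions hold. -/
def Slash (S : Set Sequent) (Γ : Cedent) : Fml → Prop
  | .var n => ID S (Γ, Fml.var n)
  | .bot => ID S (Γ, Fml.bot)
  | .and β γ => ID S (Γ, Fml.and β γ) ∧ Slash S Γ β ∧ Slash S Γ γ
  | .or β γ => ID S (Γ, Fml.or β γ) ∧ (Slash S Γ β ∨ Slash S Γ γ)
  | .imp β γ => ID S (Γ, Fml.imp β γ) ∧ (Slash S Γ β → Slash S Γ γ)

def NJ.weaken : ∀ {Γ Δ : Cedent} {α : Fml}, Γ ⊆ Δ → NJ Γ α → NJ Δ α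
  | _, _, _, h, .ax m => .ax (h m)
  | _, _, _, h, .botE m => .botE (h m)
  | _, _, _, h, .andI a b => .andI (a.weaken h) (b.weaken h)
  | _, _, _, h, .andE₀ a => .andE₀ (a.weaken h)
  | _, _, _, h, .andE₁ a => .andE₁ (a.weaken h)
  | _, _, _, h, .orI₀ a => .orI₀ (a.weaken h)
  | _, _, _, h, .orI₁ a => .orI₁ (a.weaken h)
  | _, _, _, h, .orE a b c =>
      .orE (a.weaken h) (b.weaken (Finset.insert_subset_insert _ h))
        (c.weaken (Finset.insert_subset_insert _ h))
  | _, _, _, h, .impI a => .impI (a.weaken (Finset.insert_subset_insert _ h))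
  | _, _, _, h, .impE a b => .impE (a.weaken h) (b.weaken h)

theorem Derivable.cut {Γ Δ : Cedent} {α β : Fml}
    (h1 : Derivable Γ β) (h2 : Derivable (insert β Δ) α) : Derivable (Γ ∪ Δ) α := by
  obtain ⟨d1⟩ := h1; obtain ⟨d2⟩ := h2
  exact ⟨.impE (.impI (d2.weaken (Finset.insert_subset_insert _ Finset.subset_union_right)))
    (d1.weaken Finset.subset_union_left)⟩

theorem ID.derivable {S : Set Sequent} {s : Sequent} (h : ID S s)
    (hS : ∀ s ∈ S, Derivable s.1 s.2) : Derivable s.1 s.2 := by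
  induction h with
  | mem m => exact hS _ m
  | cut _ _ ih1 ih2 => exact ih1.cut ih2

theorem Slash.toID {S : Set Sequent} {Γ : Cedent} : ∀ {α : Fml}, Slash S Γ α → ID S (Γ, α)
  | .var _, h => h
  | .bot, h => h
  | .and _ _, h => h.1
  | .or _ _, h => h.1
  | .imp _ _, h => h.1

/-- The slash implies immediate derivability; and if all sequents of `S` and all sequents
`Γ ⇒ γ` (`γ ∈ Γ`) are intuitionistically derivable, then `Γ ⇒ α` is intuitionistically
derivable. -/
theorem slash_id_and_derivable (S : Set Sequent) (Γ : Cedent) (α : Fml)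
    (h : Slash S Γ α) :
    ID S (Γ, α) ∧
      ((∀ s ∈ S, Derivable s.1 s.2) → (∀ γ ∈ Γ, Derivable Γ γ) → Derivable Γ α) :=
  ⟨h.toID, fun hS _ => h.toID.derivable hS⟩
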